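/- arXiv:1112.5524 — 6 statements merged into one kernel-verified Lean document; each statement's English description precedes it below -/
import Mathlib

section
/- Let B₁,…,B_m be pairwise disjoint vertex sets in a graph G such that no two vertices in distinct B_i are adjacent. Let H be obtained from G by deleting each B_i and adding a clique on N_G(B_i). Then π(G) ≤ π(H) + max_i π(G[B_i]). -/
/-- A colouring `φ` of a graph `G` is nonrepetitive if no path has its sequence of
colours of the form `l ++ l` for a nonempty list `l`. -/
def Nonrepetitive {V α : Type*} (G : SimpleGraph V) (φ : V → α) : Prop :=
  ∀ ⦃u v : V⦄ (p : G.Walk u v), p.IsPath →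
    ∀ l : List α, l ≠ [] → p.support.map φ ≠ l ++ l

/-- The neighbourhood of a set `S`: vertices outside `S` adjacent to some vertex of `S`. -/
def setNbhd {V : Type*} (G : SimpleGraph V) (S : Set V) : Set V :=
  {v | v ∉ S ∧ ∃ u ∈ S, G.Adj u v}

/-- The graph `H` obtained from `G` by deleting each block `B i` and adding a clique
on `N_G(B i)`. Its vertices are those of `G` lying in no block. -/
def blockGraph {V : Type*} (G : SimpleGraph V) {m : ℕ} (B : Fin m → Set V) :
    SimpleGraph {v : V // ∀ i, v ∉ B i} :=
  SimpleGraph.fromRel (fun u v =>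
    G.Adj u.1 v.1 ∨ ∃ i, u.1 ∈ setNbhd G (B i) ∧ v.1 ∈ setNbhd G (B i))

/-!
Colour the vertices outside the blocks by a nonrepetitive colouring of `H` with colours
`0, …, a-1`, and each block `B i` by a nonrepetitive colouring of `G[B i]` shifted to the
colours `a, …, a+b-1`. Since distinct blocks are non-adjacent, a path of `G` inside the blocks
lies in a single block, where it is coloured nonrepetitively. Otherwise, deleting the block
vertices of a repetitively coloured path keeps it repetitive (they are recognised by their
colour) and leaves a path of `H`: each maximal block segment lies in one block `B i`, and its two
neighbours on the path are in `N_G(B i)`, hence adjacent in `H`.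
-/

open SimpleGraph Function

theorem List.exists_eq_append_self_of_map_eq_append_self {α β : Type*} {g : α → β}
    (hg : Injective g) {L : List α} {l : List β} (h : L.map g = l ++ l) :
    ∃ L₁ : List α, L = L₁ ++ L₁ ∧ L₁.map g = l := by
  have htake : (L.take l.length).map g = l := by simp [List.map_take, h]
  have hdrop : (L.drop l.length).map g = l := by simp [List.map_drop, h]
  refine ⟨L.take l.length, ?_, htake⟩
  have := List.map_injective_iff.mpr hg (htake.trans hdrop.symm)
  conv_lhs => rw [← List.take_append_drop l.length L, ← this]

namespace Nonrepetitive

variable {V α β : Type*} {G : SimpleGraph V}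

theorem comp {φ : V → α} (h : Nonrepetitive G φ) {g : α → β} (hg : Injective g) :
    Nonrepetitive G (g ∘ φ) := by
  intro u v p hp l hl hsq
  rw [← List.map_map] at hsq
  obtain ⟨L, hL, hLl⟩ := List.exists_eq_append_self_of_map_eq_append_self hg hsq
  exact h p hp L (by rintro rfl; exact hl hLl.symm) hL

theorem map_support_ne_of_forall_mem {s : Set V} {ψ : V → α}
    (h : Nonrepetitive (G.induce s) (ψ ∘ Subtype.val)) {u v : V} (p : G.Walk u v)
    (hp : p.IsPath) (hs : ∀ x ∈ p.support, x ∈ s) {l : List α} (hl : l ≠ []) :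
    p.support.map ψ ≠ l ++ l := by
  have hq : (p.induce s hs).IsPath :=
    Walk.IsPath.of_map (f := (Embedding.induce s).toHom) (by rwa [Walk.map_induce])
  have hcol : (p.induce s hs).support.map (ψ ∘ Subtype.val) = p.support.map ψ := by
    simp [← List.map_map]
  exact hcol ▸ h _ hq l hl

end Nonrepetitive

section Blocks

variable {V : Type*} {G : SimpleGraph V} {m : ℕ} {B : Fin m → Set V}

theorem SimpleGraph.Walk.forall_mem_block_of_forall_mem_blocks
    (hnoadj : ∀ i j, i ≠ j → ∀ u ∈ B i, ∀ v ∈ B j, ¬ G.Adj u v) {i : Fin m} :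
    ∀ {u v : V} (p : G.Walk u v), u ∈ B i → (∀ z ∈ p.support, ∃ j, z ∈ B j) →
      ∀ z ∈ p.support, z ∈ B i
  | _, _, .nil, hu, _, z, hz => by
    obtain rfl : z = _ := by simpa using hz
    exact hu
  | _, _, .cons (v := w) h p, hu, hblocks, z, hz => by
    obtain ⟨j, hw⟩ := hblocks w (by simp)
    obtain rfl : j = i := by_contra fun hji => hnoadj i j (Ne.symm hji) _ hu w hw h
    rcases List.mem_cons.mp hz with rfl | hz
    · exact hu
    · exact forall_mem_block_of_forall_mem_blocks hnoadj p hw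
        (fun z hz => hblocks z (by simp [hz])) z hz

theorem blockGraph_adj_of_adj {w w' : V} {x : {v : V // ∀ i, v ∉ B i}}
    (hw : ∀ i, w ∉ B i) (hwx : w ≠ x.1) (h : G.Adj w w')
    (hx : w' = x.1 ∨ ∃ i, w' ∈ B i ∧ x.1 ∈ setNbhd G (B i)) :
    (blockGraph G B).Adj ⟨w, hw⟩ x := by
  refine (fromRel_adj _ _ _).mpr ⟨fun he => hwx (congrArg Subtype.val he), Or.inl ?_⟩
  rcases hx with rfl | ⟨i, hw'i, hxi⟩
  · exact Or.inl h
  · exact Or.inr ⟨i, ⟨hw i, w', hw'i, h.symm⟩, hxi⟩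

theorem mem_setNbhd_of_adj
    (hnoadj : ∀ i j, i ≠ j → ∀ u ∈ B i, ∀ v ∈ B j, ¬ G.Adj u v)
    {w w' : V} {x : {v : V // ∀ i, v ∉ B i}} {i : Fin m} (hw : w ∈ B i) (h : G.Adj w w')
    (hx : w' = x.1 ∨ ∃ j, w' ∈ B j ∧ x.1 ∈ setNbhd G (B j)) :
    x.1 ∈ setNbhd G (B i) := by
  rcases hx with rfl | ⟨j, hw'j, hxj⟩
  · exact ⟨x.2 i, w, hw, h⟩
  · obtain rfl : j = i := by_contra fun hji => hnoadj i j (Ne.symm hji) w hw w' hw'j h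
    exact hxj

open Classical in
/-- The second conjunct, locating the first vertex of `q`, is what makes the induction go
through. -/
theorem SimpleGraph.Walk.exists_blockGraph_walk_support_eq_filter
    (hnoadj : ∀ i j, i ≠ j → ∀ u ∈ B i, ∀ v ∈ B j, ¬ G.Adj u v) :
    ∀ {w v : V} (p : G.Walk w v), p.IsPath → (∃ z ∈ p.support, ∀ i, z ∉ B i) →
      ∃ (x y : {v : V // ∀ i, v ∉ B i}) (q : (blockGraph G B).Walk x y),
        q.support.map Subtype.val = p.support.filter (fun z => ∀ i, z ∉ B i) ∧
        (w = x.1 ∨ ∃ i, w ∈ B i ∧ x.1 ∈ setNbhd G (B i))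
  | w, _, .nil, _, hz => by
    obtain ⟨z, hz, hzB⟩ := hz
    obtain rfl : z = w := by simpa using hz
    exact ⟨⟨z, hzB⟩, ⟨z, hzB⟩, .nil, by simp [hzB], Or.inl rfl⟩
  | w, _, .cons (v := w') h p, hp, hz => by
    rw [Walk.cons_isPath_iff] at hp
    by_cases hpz : ∃ z ∈ p.support, ∀ i, z ∉ B i
    · obtain ⟨x, y, q, hq, hx⟩ := exists_blockGraph_walk_support_eq_filter hnoadj p hp.1 hpz
      by_cases hw : ∀ i, w ∉ B i
      · have hxp : x.1 ∈ p.support :=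
          List.mem_of_mem_filter (hq ▸ List.mem_map_of_mem q.start_mem_support)
        have hwx : w ≠ x.1 := fun e => hp.2 (e ▸ hxp)
        exact ⟨⟨w, hw⟩, y, .cons (blockGraph_adj_of_adj hw hwx h hx) q,
          by simp [hq, hw], Or.inl rfl⟩
      · obtain ⟨i, hwi⟩ := _root_.not_forall_not.mp hw
        refine ⟨x, y, q, ?_, Or.inr ⟨i, hwi, mem_setNbhd_of_adj hnoadj hwi h hx⟩⟩
        rw [Walk.support_cons, List.filter_cons_of_neg (by simpa using hw), hq]
    · obtain ⟨z, hz, hzB⟩ := hz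
      obtain rfl : z = w := by
        rcases List.mem_cons.mp (by simpa using hz) with rfl | hz
        · rfl
        · exact absurd ⟨z, hz, hzB⟩ hpz
      have hfilter : p.support.filter (fun z => ∀ i, z ∉ B i) = [] :=
        List.filter_eq_nil_iff.mpr fun x hx hxB => hpz ⟨x, hx, by simpa using hxB⟩
      exact ⟨⟨z, hzB⟩, ⟨z, hzB⟩, .nil, by simp [hzB, hfilter], Or.inl rfl⟩

theorem Nonrepetitive.map_support_ne_of_exists_forall_not_mem {α : Type*}
    (hnoadj : ∀ i j, i ≠ j → ∀ u ∈ B i, ∀ v ∈ B j, ¬ G.Adj u v)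
    {ψ : V → α} (h : Nonrepetitive (blockGraph G B) (ψ ∘ Subtype.val)) (P : α → Prop)
    (hP : ∀ v, P (ψ v) ↔ ∀ i, v ∉ B i) {u v : V} (p : G.Walk u v) (hp : p.IsPath)
    (hz : ∃ z ∈ p.support, ∀ i, z ∉ B i) (l : List α) :
    p.support.map ψ ≠ l ++ l := by
  classical
  intro hsq
  obtain ⟨x, y, q, hq, -⟩ := p.exists_blockGraph_walk_support_eq_filter hnoadj hp hz
  have hq_path : q.IsPath :=
    .mk' (List.Nodup.of_map Subtype.val (hq ▸ hp.support_nodup.filter _))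
  have hcol : q.support.map (ψ ∘ Subtype.val) = l.filter P ++ l.filter P := by
    rw [← List.map_map, hq, ← List.filter_append, ← hsq, List.filter_map]
    congr 1
    exact List.filter_congr fun v _ => by simp [hP]
  refine h q hq_path _ (fun hnil => q.support_ne_nil ?_) hcol
  rw [hnil, List.append_nil] at hcol
  exact List.map_eq_nil_iff.mp hcol

end Blocks

section BlockColoring

variable {V : Type*} {m a b : ℕ} {B : Fin m → Set V}

open Classical in
noncomputable def blockColoring (B : Fin m → Set V) (φH : {v : V // ∀ i, v ∉ B i} → Fin a)
    (φB : ∀ i, B i → Fin b) : V → Fin (a + b) := fun v =>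
  if h : ∃ i, v ∈ B i then Fin.natAdd a (φB h.choose ⟨v, h.choose_spec⟩)
  else Fin.castAdd b (φH ⟨v, fun i hi => h ⟨i, hi⟩⟩)

variable {φH : {v : V // ∀ i, v ∉ B i} → Fin a} {φB : ∀ i, B i → Fin b}

theorem blockColoring_comp_val_of_forall_not_mem :
    blockColoring B φH φB ∘ Subtype.val = Fin.castAdd b ∘ φH := by
  ext ⟨v, hv⟩ : 1
  simp [blockColoring, hv]

theorem blockColoring_comp_val_of_mem (hdisj : ∀ i j, i ≠ j → Disjoint (B i) (B j))
    (i : Fin m) :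
    blockColoring B φH φB ∘ Subtype.val = Fin.natAdd a ∘ φB i := by
  ext ⟨v, hv⟩ : 1
  have h : ∃ j, v ∈ B j := ⟨i, hv⟩
  obtain rfl : h.choose = i :=
    by_contra fun hne => Set.disjoint_left.mp (hdisj _ _ hne) h.choose_spec hv
  simp [blockColoring, h]

theorem blockColoring_val_lt_iff {v : V} :
    (blockColoring B φH φB v).val < a ↔ ∀ i, v ∉ B i := by
  unfold blockColoring
  split_ifs with h <;> simpa using h

end BlockColoring

/-- Let `B 1, …, B m` be pairwise disjoint vertex sets in `G` with no edges between
distinct blocks, and let `H` be obtained from `G` by deleting each `B i` and adding a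
clique on `N_G(B i)`.  Then `π(G) ≤ π(H) + max_i π(G[B i])`. -/
theorem pi_le_blocks {V : Type*} (G : SimpleGraph V) {m : ℕ} (B : Fin m → Set V)
    (hdisj : ∀ i j, i ≠ j → Disjoint (B i) (B j))
    (hnoadj : ∀ i j, i ≠ j → ∀ u ∈ B i, ∀ v ∈ B j, ¬ G.Adj u v)
    (a b : ℕ)
    (hH : ∃ φ : {v : V // ∀ i, v ∉ B i} → Fin a, Nonrepetitive (blockGraph G B) φ)
    (hB : ∀ i : Fin m, ∃ φ : (B i) → Fin b, Nonrepetitive (G.induce (B i)) φ) :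
    ∃ φ : V → Fin (a + b), Nonrepetitive G φ := by
  obtain ⟨φH, hφH⟩ := hH
  choose φB hφB using hB
  have hψH : Nonrepetitive (blockGraph G B) (blockColoring B φH φB ∘ Subtype.val) := by
    rw [blockColoring_comp_val_of_forall_not_mem]
    exact hφH.comp (Fin.castAdd_injective a b)
  have hψB (i : Fin m) :
      Nonrepetitive (G.induce (B i)) (blockColoring B φH φB ∘ Subtype.val) := by
    rw [blockColoring_comp_val_of_mem hdisj]
    exact (hφB i).comp (Fin.natAdd_injective b a)
  refine ⟨blockColoring B φH φB, fun u v p hp l hl => ?_⟩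
  by_cases hblocks : ∀ z ∈ p.support, ∃ i, z ∈ B i
  · obtain ⟨i, hu⟩ := hblocks u p.start_mem_support
    exact (hψB i).map_support_ne_of_forall_mem p hp
      (p.forall_mem_block_of_forall_mem_blocks hnoadj hu hblocks) hl
  · push Not at hblocks
    exact hψH.map_support_ne_of_exists_forall_not_mem hnoadj (fun c => c.val < a)
      (fun _ => blockColoring_val_lt_iff) p hp hblocks l
end

section
/- Every graph G with pathwidth k contains pairwise disjoint vertex sets B₁,…,B_m such that (1) no two vertices in distinct B_i are adjacent, (2) each G[B_i] has pathwidth at most k−1, and (3) the graph H obtained from G by deleting each B_i and adding a clique on N_G(B_i) is a subgraph of P_m · K_{k+1} (the lexicographic product of a path with a complete graph). -/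
/-- A path decomposition of a graph `G`: a finite sequence of bags covering every vertex
and every edge, such that the bags containing any fixed vertex are consecutive. -/
structure PathDecomp {V : Type*} (G : SimpleGraph V) where
  len : ℕ
  bag : Fin len → Finset V
  mem_bag : ∀ v : V, ∃ i, v ∈ bag i
  edge_mem : ∀ ⦃u v : V⦄, G.Adj u v → ∃ i, u ∈ bag i ∧ v ∈ bag i
  consecutive : ∀ (v : V) (i j k : Fin len), i ≤ j → j ≤ k →
    v ∈ bag i → v ∈ bag k → v ∈ bag j

/-- `G` has pathwidth at most `k`: some path decomposition has all bags of size `≤ k + 1`. -/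
def HasPathwidthLE {V : Type*} (G : SimpleGraph V) (k : ℕ) : Prop :=
  ∃ d : PathDecomp G, ∀ i, (d.bag i).card ≤ k + 1

/-- The lexicographic product `P_m · K_{k+1}` of the path on `m` vertices with the
complete graph on `k + 1` vertices: each vertex of the path is replaced by a
`(k+1)`-clique and each edge by a complete bipartite graph. -/
def pathLexComplete (m k : ℕ) : SimpleGraph (Fin m × Fin (k + 1)) :=
  SimpleGraph.fromRel (fun x y => (SimpleGraph.pathGraph m).Adj x.1 y.1 ∨ x.1 = y.1)

/-!
Cut the path decomposition greedily at times `0 = t₀ < t₁ < ⋯`, where `tᵢ₊₁` is the first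
time after `tᵢ` at which every vertex of the bag at `tᵢ` has disappeared. The boundary bags
`Xᵢ` at the times `tᵢ` are pairwise disjoint, and a vertex of `G` lies either in some `Xᵢ` or
in the block `Bᵢ` of vertices living strictly between `tᵢ` and `tᵢ₊₁`. Every bag in that window
still meets `Xᵢ`, outside `Bᵢ`, which lowers the width of `G[Bᵢ]` by one. Edges and
neighbourhoods of blocks only join `Xᵢ` to `Xᵢ` or `Xᵢ₊₁`, so numbering each `Xᵢ` injectively
by `Fin (k + 1)` embeds `H` in `P_m · K_{k+1}`.
-/

lemma pathLexComplete_adj_of_le_succ {m k : ℕ} {x y : Fin m × Fin (k + 1)} (hne : x ≠ y)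
    (hxy : (x.1 : ℕ) ≤ y.1 + 1) (hyx : (y.1 : ℕ) ≤ x.1 + 1) : (pathLexComplete m k).Adj x y := by
  rw [pathLexComplete, SimpleGraph.fromRel_adj, SimpleGraph.pathGraph_adj, Fin.ext_iff]
  exact ⟨hne, Or.inl (by omega)⟩

lemma exists_embedding_pathLexComplete {W : Type*} (H : SimpleGraph W) {m k : ℕ}
    (X : Fin m → Finset W) (hX : ∀ i, (X i).card ≤ k + 1) (c : W → Fin m)
    (hc : ∀ w, w ∈ X (c w)) (hH : ∀ u v, H.Adj u v → (c u : ℕ) ≤ c v + 1) :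
    ∃ f : W → Fin m × Fin (k + 1),
      Function.Injective f ∧ ∀ u v, H.Adj u v → (pathLexComplete m k).Adj (f u) (f v) := by
  classical
  have hcol (i : Fin m) : ∃ g : W → Fin (k + 1), Set.InjOn g (X i) :=
    ⟨fun w => if h : w ∈ X i then Fin.castLE (hX i) ((X i).equivFin ⟨w, h⟩) else 0,
      fun u hu v hv huv => by
        simpa [dif_pos (Finset.mem_coe.1 hu), dif_pos (Finset.mem_coe.1 hv)] using huv⟩
  choose col hcol using hcol
  have hinj : Function.Injective fun w => (c w, col (c w) w) := by
    intro u v huv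
    obtain ⟨hc_eq, hcol_eq⟩ := Prod.ext_iff.1 huv
    dsimp only at hc_eq hcol_eq
    rw [hc_eq] at hcol_eq
    exact hcol _ (hc_eq ▸ hc u) (hc v) hcol_eq
  exact ⟨_, hinj, fun u v huv =>
    pathLexComplete_adj_of_le_succ (hinj.ne huv.ne) (hH u v huv) (hH v u huv.symm)⟩

namespace PathDecomp

variable {V : Type*} {G : SimpleGraph V}

def induce (d : PathDecomp G) (S : Set V) [DecidablePred (· ∈ S)] :
    PathDecomp (G.induce S) where
  len := d.len
  bag j := (d.bag j).subtype (· ∈ S)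
  mem_bag v := (d.mem_bag v).imp fun _ h => Finset.mem_subtype.2 h
  edge_mem _ _ huv := (d.edge_mem huv).imp fun _ h =>
    ⟨Finset.mem_subtype.2 h.1, Finset.mem_subtype.2 h.2⟩
  consecutive v _ _ _ hij hjk hi hk := Finset.mem_subtype.2 <|
    d.consecutive v _ _ _ hij hjk (Finset.mem_subtype.1 hi) (Finset.mem_subtype.1 hk)

variable (d : PathDecomp G)

noncomputable def bagAt (t : ℕ) : Finset V :=
  if h : t < d.len then d.bag ⟨t, h⟩ else ∅

@[simp]
lemma bagAt_val (j : Fin d.len) : d.bagAt j = d.bag j := by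
  simp [bagAt]

lemma card_bagAt_le {w : ℕ} (hd : ∀ j, (d.bag j).card ≤ w) (t : ℕ) : (d.bagAt t).card ≤ w := by
  unfold bagAt
  split <;> simp [hd]

lemma lt_len_of_mem_bagAt {v : V} {t : ℕ} (h : v ∈ d.bagAt t) : t < d.len := by
  by_contra ht
  simp [bagAt, ht] at h

lemma exists_mem_bagAt (v : V) : ∃ t, v ∈ d.bagAt t :=
  let ⟨j, h⟩ := d.mem_bag v
  ⟨j, by simpa using h⟩

lemma exists_mem_bagAt_of_adj {u v : V} (huv : G.Adj u v) :
    ∃ t, u ∈ d.bagAt t ∧ v ∈ d.bagAt t :=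
  let ⟨j, h⟩ := d.edge_mem huv
  ⟨j, by simpa using h⟩

lemma mem_bagAt_of_le_of_le {v : V} {a b c : ℕ} (hab : a ≤ b) (hbc : b ≤ c)
    (ha : v ∈ d.bagAt a) (hc : v ∈ d.bagAt c) : v ∈ d.bagAt b := by
  have hc' := d.lt_len_of_mem_bagAt hc
  have ha' := d.lt_len_of_mem_bagAt ha
  have hb' : b < d.len := hbc.trans_lt hc'
  have := d.consecutive v ⟨a, ha'⟩ ⟨b, hb'⟩ ⟨c, hc'⟩ hab hbc
    (by simpa [bagAt, ha'] using ha) (by simpa [bagAt, hc'] using hc)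
  simpa [bagAt, hb'] using this

open scoped Classical in
noncomputable def lastBag (v : V) : ℕ :=
  Nat.findGreatest (fun t => v ∈ d.bagAt t) d.len

open scoped Classical in
lemma le_lastBag {v : V} {t : ℕ} (h : v ∈ d.bagAt t) : t ≤ d.lastBag v :=
  Nat.le_findGreatest (d.lt_len_of_mem_bagAt h).le h

open scoped Classical in
lemma mem_bagAt_lastBag {v : V} {t : ℕ} (h : v ∈ d.bagAt t) : v ∈ d.bagAt (d.lastBag v) :=
  Nat.findGreatest_spec (P := fun t => v ∈ d.bagAt t) (d.lt_len_of_mem_bagAt h).le h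

noncomputable def nextBoundary (s : ℕ) : ℕ :=
  max s ((d.bagAt s).sup d.lastBag) + 1

lemma lt_nextBoundary (s : ℕ) : s < d.nextBoundary s :=
  Nat.lt_succ_of_le (le_max_left _ _)

lemma lt_nextBoundary_of_mem {v : V} {s u : ℕ} (hs : v ∈ d.bagAt s) (hu : v ∈ d.bagAt u) :
    u < d.nextBoundary s :=
  Nat.lt_succ_of_le <| ((d.le_lastBag hu).trans (Finset.le_sup hs)).trans (le_max_right _ _)

lemma exists_mem_bagAt_of_lt_nextBoundary {s u : ℕ} (hsu : s < u)
    (hu : u < d.nextBoundary s) : ∃ x ∈ d.bagAt s, x ∈ d.bagAt u := by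
  have hu_sup : u ≤ (d.bagAt s).sup d.lastBag := by
    have := Nat.lt_succ_iff.1 hu
    omega
  obtain ⟨x, hxs, hux⟩ := (Finset.le_sup_iff (by simp; omega)).1 hu_sup
  exact ⟨x, hxs, d.mem_bagAt_of_le_of_le hsu.le hux hxs (d.mem_bagAt_lastBag hxs)⟩

noncomputable def boundary : ℕ → ℕ
  | 0 => 0
  | i + 1 => d.nextBoundary (boundary i)

lemma boundary_strictMono : StrictMono d.boundary :=
  strictMono_nat_of_lt_succ fun i => d.lt_nextBoundary (d.boundary i)

lemma exists_boundary_le_lt_boundary_succ (t : ℕ) :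
    ∃ i, d.boundary i ≤ t ∧ t < d.boundary (i + 1) := by
  have hex : ∃ j, t < d.boundary j := ⟨t + 1, d.boundary_strictMono.le_apply⟩
  obtain ⟨i, hi⟩ : ∃ i, Nat.find hex = i + 1 := Nat.exists_eq_succ_of_ne_zero fun h => by
    simpa [h, boundary] using Nat.find_spec hex
  exact ⟨i, not_lt.1 (Nat.find_min hex (by omega)), hi ▸ Nat.find_spec hex⟩

lemma eq_of_mem_bagAt_boundary {v : V} {i j : ℕ} (hi : v ∈ d.bagAt (d.boundary i))
    (hj : v ∈ d.bagAt (d.boundary j)) : i = j := by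
  by_contra hne
  wlog hij : i < j generalizing i j
  · exact this hj hi (Ne.symm hne) (by omega)
  have h₁ : d.boundary j < d.boundary (i + 1) := d.lt_nextBoundary_of_mem hi hj
  have h₂ : d.boundary (i + 1) ≤ d.boundary j := d.boundary_strictMono.monotone hij
  omega

lemma eq_or_eq_succ_of_mem_bagAt_boundary {v : V} {i j s : ℕ} (his : d.boundary i ≤ s)
    (hsi : s < d.boundary (i + 1)) (hs : v ∈ d.bagAt s) (hj : v ∈ d.bagAt (d.boundary j)) :
    j = i ∨ j = i + 1 := by
  have hmono {a b : ℕ} : d.boundary a < d.boundary b ↔ a < b := d.boundary_strictMono.lt_iff_lt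
  rcases le_or_gt (d.boundary j) s with hjs | hsj
  · have := d.lt_nextBoundary_of_mem hj hs
    have : i < j + 1 := hmono.1 (his.trans_lt this)
    have : j < i + 1 := hmono.1 (hjs.trans_lt hsi)
    omega
  · have hij : i + 1 ≤ j := hmono.1 (his.trans_lt hsj)
    have := d.mem_bagAt_of_le_of_le hsi.le (d.boundary_strictMono.monotone hij) hs hj
    exact Or.inr (d.eq_of_mem_bagAt_boundary hj this)

def block (i : ℕ) : Set V :=
  {v | ∀ t, v ∈ d.bagAt t → d.boundary i < t ∧ t < d.boundary (i + 1)}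

lemma eq_of_mem_block_of_mem_bagAt {u v : V} {i j t : ℕ} (hu : u ∈ d.block i)
    (hv : v ∈ d.block j) (hut : u ∈ d.bagAt t) (hvt : v ∈ d.bagAt t) : i = j := by
  have hmono {a b : ℕ} : d.boundary a < d.boundary b ↔ a < b := d.boundary_strictMono.lt_iff_lt
  obtain ⟨hi₁, hi₂⟩ := hu t hut
  obtain ⟨hj₁, hj₂⟩ := hv t hvt
  have : i < j + 1 := hmono.1 (hi₁.trans hj₂)
  have : j < i + 1 := hmono.1 (hj₁.trans hi₂)
  omega

lemma exists_mem_bagAt_not_mem_block {x : V} {i t : ℕ} (hx : x ∈ d.bagAt t)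
    (hxB : x ∈ d.block i) : ∃ y ∈ d.bagAt t, y ∉ d.block i := by
  obtain ⟨hit, hti⟩ := hxB t hx
  obtain ⟨y, hyi, hyt⟩ := d.exists_mem_bagAt_of_lt_nextBoundary hit hti
  exact ⟨y, hyt, fun hyB => (hyB _ hyi).1.false⟩

lemma card_filter_block_le {k : ℕ} (hd : ∀ j, (d.bag j).card ≤ k + 1) (i : ℕ) (j : Fin d.len)
    [DecidablePred (· ∈ d.block i)] : ((d.bag j).filter (· ∈ d.block i)).card ≤ k := by
  rcases ((d.bag j).filter (· ∈ d.block i)).eq_empty_or_nonempty with h | ⟨x, hx⟩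
  · simp [h]
  obtain ⟨hxj, hxB⟩ := Finset.mem_filter.1 hx
  obtain ⟨y, hyj, hyB⟩ := d.exists_mem_bagAt_not_mem_block (t := j) (by simpa using hxj) hxB
  have hssub : (d.bag j).filter (· ∈ d.block i) ⊂ d.bag j :=
    Finset.filter_ssubset.2 ⟨y, by simpa using hyj, hyB⟩
  have := Finset.card_lt_card hssub
  have := hd j
  omega

lemma hasPathwidthLE_induce_block {k : ℕ} (hd : ∀ j, (d.bag j).card ≤ k + 1) (i : ℕ) :
    HasPathwidthLE (G.induce (d.block i)) (k - 1) := by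
  classical
  refine ⟨d.induce (d.block i), fun j => ?_⟩
  have := d.card_filter_block_le hd i j
  simp only [induce, Finset.card_subtype]
  omega

lemma mem_block_of_not_mem_bagAt_boundary {v : V} {i t : ℕ} (hit : d.boundary i ≤ t)
    (hti : t < d.boundary (i + 1)) (ht : v ∈ d.bagAt t)
    (hi : v ∉ d.bagAt (d.boundary i)) (hi' : v ∉ d.bagAt (d.boundary (i + 1))) :
    v ∈ d.block i := by
  intro s hs
  constructor
  · by_contra! hsi
    exact hi (d.mem_bagAt_of_le_of_le hsi hit hs ht)
  · by_contra! his
    exact hi' (d.mem_bagAt_of_le_of_le hti.le his ht hs)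

lemma exists_mem_bagAt_boundary {v : V} (hv : ∀ i : Fin d.len, v ∉ d.block i) :
    ∃ j < d.len, v ∈ d.bagAt (d.boundary j) := by
  have hlen (j : ℕ) (h : v ∈ d.bagAt (d.boundary j)) : j < d.len :=
    d.boundary_strictMono.le_apply.trans_lt (d.lt_len_of_mem_bagAt h)
  obtain ⟨t, ht⟩ := d.exists_mem_bagAt v
  obtain ⟨i, hit, hti⟩ := d.exists_boundary_le_lt_boundary_succ t
  by_cases hi : v ∈ d.bagAt (d.boundary i)
  · exact ⟨i, hlen i hi, hi⟩
  by_cases hi' : v ∈ d.bagAt (d.boundary (i + 1))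
  · exact ⟨i + 1, hlen _ hi', hi'⟩
  have hilen : i < d.len :=
    d.boundary_strictMono.le_apply.trans_lt (hit.trans_lt (d.lt_len_of_mem_bagAt ht))
  exact absurd (d.mem_block_of_not_mem_bagAt_boundary hit hti ht hi hi') (hv ⟨i, hilen⟩)

lemma boundary_index_le_succ_of_adj {u v : V} {i j : ℕ} (huv : G.Adj u v)
    (hu : u ∈ d.bagAt (d.boundary i)) (hv : v ∈ d.bagAt (d.boundary j)) : i ≤ j + 1 := by
  obtain ⟨s, hus, hvs⟩ := d.exists_mem_bagAt_of_adj huv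
  obtain ⟨l, hls, hsl⟩ := d.exists_boundary_le_lt_boundary_succ s
  have := d.eq_or_eq_succ_of_mem_bagAt_boundary hls hsl hus hu
  have := d.eq_or_eq_succ_of_mem_bagAt_boundary hls hsl hvs hv
  omega

lemma eq_or_eq_succ_of_mem_setNbhd_block {v : V} {i l : ℕ} (hv : v ∈ setNbhd G (d.block l))
    (hi : v ∈ d.bagAt (d.boundary i)) : i = l ∨ i = l + 1 := by
  obtain ⟨-, u, hu, huv⟩ := hv
  obtain ⟨s, hus, hvs⟩ := d.exists_mem_bagAt_of_adj huv
  obtain ⟨hls, hsl⟩ := hu s hus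
  exact d.eq_or_eq_succ_of_mem_bagAt_boundary hls.le hsl hvs hi

lemma boundary_index_le_succ_of_blockGraph_adj {u v : {v : V // ∀ i : Fin d.len, v ∉ d.block i}}
    (huv : (blockGraph G fun i : Fin d.len => d.block i).Adj u v) {i j : ℕ}
    (hu : u.1 ∈ d.bagAt (d.boundary i)) (hv : v.1 ∈ d.bagAt (d.boundary j)) : i ≤ j + 1 := by
  rcases huv.2 with (hadj | ⟨l, hul, hvl⟩) | (hadj | ⟨l, hvl, hul⟩)
  · exact d.boundary_index_le_succ_of_adj hadj hu hv
  · have := d.eq_or_eq_succ_of_mem_setNbhd_block hul hu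
    have := d.eq_or_eq_succ_of_mem_setNbhd_block hvl hv
    omega
  · have := d.boundary_index_le_succ_of_adj hadj hv hu
    have := d.boundary_index_le_succ_of_adj hadj.symm hu hv
    omega
  · have := d.eq_or_eq_succ_of_mem_setNbhd_block hul hu
    have := d.eq_or_eq_succ_of_mem_setNbhd_block hvl hv
    omega

lemma exists_embedding_blockGraph {k : ℕ} (hd : ∀ j, (d.bag j).card ≤ k + 1) :
    ∃ f : {v : V // ∀ i : Fin d.len, v ∉ d.block i} → Fin d.len × Fin (k + 1),
      Function.Injective f ∧ ∀ u v, (blockGraph G fun i : Fin d.len => d.block i).Adj u v →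
        (pathLexComplete d.len k).Adj (f u) (f v) := by
  classical
  choose c hc_lt hc using fun v : {v : V // ∀ i : Fin d.len, v ∉ d.block i} =>
    d.exists_mem_bagAt_boundary v.2
  refine exists_embedding_pathLexComplete _
    (fun i => (d.bagAt (d.boundary i)).subtype fun v => ∀ i : Fin d.len, v ∉ d.block i)
    (fun i => ?_) (fun v => ⟨c v, hc_lt v⟩) (fun v => Finset.mem_subtype.2 (hc v))
    (fun u v huv => d.boundary_index_le_succ_of_blockGraph_adj huv (hc u) (hc v))
  rw [Finset.card_subtype]
  exact (Finset.card_filter_le _ _).trans (d.card_bagAt_le hd _)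

end PathDecomp

/-- Every graph `G` with pathwidth `k` contains pairwise disjoint vertex sets
`B 1, …, B m` such that no two vertices in distinct blocks are adjacent, each induced
subgraph `G[B i]` has pathwidth at most `k - 1`, and the graph `H` obtained from `G`
by deleting each `B i` and adding a clique on `N_G(B i)` is a subgraph of
`P_m · K_{k+1}`. -/
theorem pathwidth_attack {V : Type*} (G : SimpleGraph V) (k : ℕ)
    (hpw : HasPathwidthLE G k) :
    ∃ (m : ℕ) (B : Fin m → Set V),
      (∀ i j, i ≠ j → Disjoint (B i) (B j)) ∧
      (∀ i j, i ≠ j → ∀ u ∈ B i, ∀ v ∈ B j, ¬ G.Adj u v) ∧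
      (∀ i, HasPathwidthLE (G.induce (B i)) (k - 1)) ∧
      (∃ f : {v : V // ∀ i, v ∉ B i} → Fin m × Fin (k + 1),
        Function.Injective f ∧
        ∀ u v, (blockGraph G B).Adj u v → (pathLexComplete m k).Adj (f u) (f v)) := by
  obtain ⟨d, hd⟩ := hpw
  refine ⟨d.len, fun i => d.block i, fun i j hij => ?_, fun i j hij u hu v hv huv => ?_,
    fun i => d.hasPathwidthLE_induce_block hd i, d.exists_embedding_blockGraph hd⟩
  · refine Set.disjoint_left.2 fun v hvi hvj => hij (Fin.ext ?_)
    obtain ⟨t, ht⟩ := d.exists_mem_bagAt v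
    exact d.eq_of_mem_block_of_mem_bagAt hvi hvj ht ht
  · obtain ⟨t, hut, hvt⟩ := d.exists_mem_bagAt_of_adj huv
    exact hij (Fin.ext (d.eq_of_mem_block_of_mem_bagAt hu hv hut hvt))
end

section
/- For every graph G with pathwidth k, the star chromatic number satisfies χ_st(G) ≤ 3k + 1. -/
/-- A proper colouring: adjacent vertices get distinct colours. -/
def ProperColouring {V α : Type*} (G : SimpleGraph V) (φ : V → α) : Prop :=
  ∀ u v : V, G.Adj u v → φ u ≠ φ v

/-- A star colouring: a proper colouring with no 2-coloured path on four vertices. -/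
def StarColouring {V α : Type*} (G : SimpleGraph V) (φ : V → α) : Prop :=
  ProperColouring G φ ∧
    ∀ ⦃u v : V⦄ (p : G.Walk u v), p.IsPath → p.support.length = 4 →
      ¬ ∃ a b : α, ∀ x ∈ p.support, φ x = a ∨ φ x = b

open Finset

section Colouring

variable {V α : Type*} {G : SimpleGraph V}

lemma eq_of_ne_of_ne_of_two_valued {a b x y z : α} (hx : x = a ∨ x = b) (hy : y = a ∨ y = b)
    (hz : z = a ∨ z = b) (hxy : x ≠ y) (hyz : y ≠ z) : x = z := by
  rcases hx with rfl | rfl <;> rcases hy with rfl | rfl <;> rcases hz with rfl | rfl <;> tauto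

theorem ProperColouring.starColouring {φ : V → α} (hφ : ProperColouring G φ)
    (h : ∀ ⦃x₀ x₁ x₂ x₃ : V⦄, G.Adj x₀ x₁ → G.Adj x₁ x₂ → G.Adj x₂ x₃ → x₀ ≠ x₂ → x₁ ≠ x₃ →
      φ x₀ = φ x₂ → φ x₁ ≠ φ x₃) :
    StarColouring G φ := by
  refine ⟨hφ, fun u v p hp hlen ⟨a, b, hab⟩ => ?_⟩
  rcases p with _ | ⟨e₀₁, _ | ⟨e₁₂, _ | ⟨e₂₃, _ | ⟨_, _⟩⟩⟩⟩ <;> simp at hlen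
  simp only [SimpleGraph.Walk.support_cons, SimpleGraph.Walk.support_nil, List.mem_cons,
    List.not_mem_nil, or_false, forall_eq_or_imp, forall_eq] at hab
  obtain ⟨h₀, h₁, h₂, h₃⟩ := hab
  have hnodup := hp.support_nodup
  simp only [SimpleGraph.Walk.support_cons, SimpleGraph.Walk.support_nil, List.nodup_cons,
    List.mem_cons, List.not_mem_nil, not_or] at hnodup
  exact h e₀₁ e₁₂ e₂₃ hnodup.1.2.1 hnodup.2.1.2.1
    (eq_of_ne_of_ne_of_two_valued h₀ h₁ h₂ (hφ _ _ e₀₁) (hφ _ _ e₁₂))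
    (eq_of_ne_of_ne_of_two_valued h₁ h₂ h₃ (hφ _ _ e₁₂) (hφ _ _ e₂₃))

end Colouring

/-- `G` is a subgraph of the interval graph of the intervals `[left v, right v]`. -/
structure IntervalModel {V : Type*} (G : SimpleGraph V) where
  left : V → ℕ
  right : V → ℕ
  left_le_right : ∀ v, left v ≤ right v
  left_le_right_of_adj : ∀ ⦃u v⦄, G.Adj u v → left u ≤ right v

namespace IntervalModel

open scoped Classical

variable {V : Type*} {G : SimpleGraph V} [Fintype V] (I : IntervalModel G)

noncomputable def stab (R : Set V) (i : ℕ) : Finset V :=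
  {v | v ∈ R ∧ I.left v ≤ i ∧ i ≤ I.right v}

variable {I} in
lemma mem_stab {R : Set V} {i : ℕ} {v : V} :
    v ∈ I.stab R i ↔ v ∈ R ∧ I.left v ≤ i ∧ i ≤ I.right v := by
  simp [stab]

lemma stab_mono {R S : Set V} (h : R ⊆ S) (i : ℕ) : I.stab R i ⊆ I.stab S i := fun _ hv ↦
  mem_stab.2 ⟨h (mem_stab.1 hv).1, (mem_stab.1 hv).2⟩

lemma exists_mem_stab_of_adj {R : Set V} {u v : V} (huv : G.Adj u v) (hu : u ∈ R) (hv : v ∈ R) :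
    ∃ i, u ∈ I.stab R i ∧ v ∈ I.stab R i := by
  have := I.left_le_right u
  have := I.left_le_right v
  have := I.left_le_right_of_adj huv
  have := I.left_le_right_of_adj huv.symm
  exact ⟨max (I.left u) (I.left v), mem_stab.2 ⟨hu, by omega⟩, mem_stab.2 ⟨hv, by omega⟩⟩

section Chain

variable (R : Set V)

def HasNext (s : ℕ) : Prop := ∃ j, s ≤ j ∧ (I.stab R j).Nonempty

/-- The greedy step from `s`: at the first point `≥ s` covered by `R`, the interval of `R` through
it that reaches furthest right. -/
noncomputable def next {s : ℕ} (h : I.HasNext R s) : V :=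
  ((I.stab R (Nat.find h)).exists_max_image I.right (Nat.find_spec h).2).choose

lemma next_spec {s : ℕ} (h : I.HasNext R s) :
    I.next R h ∈ I.stab R (Nat.find h) ∧
      ∀ u ∈ I.stab R (Nat.find h), I.right u ≤ I.right (I.next R h) :=
  ((I.stab R (Nat.find h)).exists_max_image I.right (Nat.find_spec h).2).choose_spec

/-- The point from which the `m`-th greedy step searches. -/
noncomputable def pos : ℕ → ℕ
  | 0 => 0
  | m + 1 => if h : I.HasNext R (pos m) then I.right (I.next R h) + 1 else pos m

def IsChainAt (m : ℕ) (v : V) : Prop := ∃ h : I.HasNext R (I.pos R m), I.next R h = v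

variable {I R}

lemma IsChainAt.exists_point {m : ℕ} {v : V} (hv : I.IsChainAt R m v) :
    ∃ j, I.pos R m ≤ j ∧ v ∈ I.stab R j ∧ (∀ u ∈ I.stab R j, I.right u ≤ I.right v) ∧
      ∀ j', I.pos R m ≤ j' → (I.stab R j').Nonempty → j ≤ j' := by
  obtain ⟨h, rfl⟩ := hv
  exact ⟨Nat.find h, (Nat.find_spec h).1, (I.next_spec R h).1, (I.next_spec R h).2,
    fun j' hj' hne ↦ Nat.find_min' h ⟨hj', hne⟩⟩

lemma IsChainAt.mem {m : ℕ} {v : V} (hv : I.IsChainAt R m v) : v ∈ R := by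
  obtain ⟨j, -, hvj, -⟩ := hv.exists_point
  exact (mem_stab.1 hvj).1

lemma IsChainAt.pos_succ {m : ℕ} {v : V} (hv : I.IsChainAt R m v) :
    I.pos R (m + 1) = I.right v + 1 := by
  obtain ⟨h, rfl⟩ := hv
  simp [pos, h]

lemma IsChainAt.pos_le_right {m : ℕ} {v : V} (hv : I.IsChainAt R m v) :
    I.pos R m ≤ I.right v := by
  obtain ⟨j, hj, hvj, -⟩ := hv.exists_point
  exact hj.trans (mem_stab.1 hvj).2.2

lemma pos_monotone : Monotone (I.pos R) := by
  refine monotone_nat_of_le_succ fun m ↦ ?_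
  by_cases h : I.HasNext R (I.pos R m)
  · have hv : I.IsChainAt R m (I.next R h) := ⟨h, rfl⟩
    rw [hv.pos_succ]
    exact hv.pos_le_right.trans (Nat.le_succ _)
  · simp [pos, h]

lemma IsChainAt.exists_of_le {m m' : ℕ} {v : V} (hv : I.IsChainAt R m' v) (hm : m ≤ m') :
    ∃ u, I.IsChainAt R m u := by
  induction m' generalizing v with
  | zero => exact ⟨v, Nat.le_zero.1 hm ▸ hv⟩
  | succ n ih =>
    rcases hm.eq_or_lt with rfl | hlt
    · exact ⟨v, hv⟩
    · by_cases h : I.HasNext R (I.pos R n)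
      · exact ih ⟨h, rfl⟩ (Nat.le_of_lt_succ hlt)
      · obtain ⟨h', -⟩ := hv
        simp [pos, h] at h'

lemma IsChainAt.right_lt_right {m m' : ℕ} {u v : V} (hu : I.IsChainAt R m u)
    (hv : I.IsChainAt R m' v) (hm : m < m') : I.right u < I.right v := by
  have : I.pos R (m + 1) ≤ I.pos R m' := I.pos_monotone hm
  have := hu.pos_succ
  have := hv.pos_le_right
  omega

lemma IsChainAt.unique {m : ℕ} {u v : V} (hu : I.IsChainAt R m u) (hv : I.IsChainAt R m v) :
    u = v := by
  obtain ⟨_, rfl⟩ := hu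
  obtain ⟨_, rfl⟩ := hv
  rfl

/-- Otherwise `w` would contain the point at which the `(m + 1)`-st chain vertex was chosen
furthest-reaching. -/
lemma IsChainAt.right_le_of_left_le {m : ℕ} {u u' w : V} (hu : I.IsChainAt R m u)
    (hu' : I.IsChainAt R (m + 1) u') (hw : w ∈ R) (hwu : I.left w ≤ I.right u) :
    I.right w ≤ I.right u' := by
  obtain ⟨j, hj, hu'j, hmax, -⟩ := hu'.exists_point
  by_contra! hlt
  have := hu.pos_succ
  have := (mem_stab.1 hu'j).2.2
  exact hlt.not_ge (hmax w (mem_stab.2 ⟨hw, by omega, by omega⟩))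

lemma IsChainAt.right_lt_left {m m' : ℕ} {u v : V} (hu : I.IsChainAt R m u)
    (hv : I.IsChainAt R m' v) (hm : m + 2 ≤ m') : I.right u < I.left v := by
  obtain ⟨u', hu'⟩ := hv.exists_of_le (m := m + 1) (by omega)
  by_contra! hle
  exact (hu'.right_lt_right hv (by omega)).not_ge (hu.right_le_of_left_le hu' hv.mem hle)

lemma IsChainAt.right_lt_left_of_mem {m m' : ℕ} {u v w : V} (hu : I.IsChainAt R m u)
    (hv : I.IsChainAt R m' v) (hm : m + 3 ≤ m') (hw : w ∈ R) (hwu : I.left w ≤ I.right u) :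
    I.right w < I.left v := by
  obtain ⟨u', hu'⟩ := hv.exists_of_le (m := m + 1) (by omega)
  have := hu'.right_lt_left hv (by omega)
  have := hu.right_le_of_left_le hu' hw hwu
  omega

lemma exists_isChainAt_mem_stab {i : ℕ} (hne : (I.stab R i).Nonempty) {m : ℕ}
    (hm : I.pos R m ≤ i) : ∃ m' v, I.IsChainAt R m' v ∧ v ∈ I.stab R i := by
  obtain ⟨v, hv⟩ : ∃ v, I.IsChainAt R m v := ⟨_, ⟨i, hm, hne⟩, rfl⟩
  obtain ⟨j, hj, hvj, -, hmin⟩ := hv.exists_point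
  by_cases hi : i ≤ I.right v
  · have := hmin i hm hne
    exact ⟨m, v, hv, mem_stab.2 ⟨(mem_stab.1 hvj).1, by have := (mem_stab.1 hvj).2.1; omega, hi⟩⟩
  · exact exists_isChainAt_mem_stab hne (m := m + 1) (by rw [hv.pos_succ]; omega)
termination_by i + 1 - I.pos R m
decreasing_by
  have := hv.pos_succ
  have := hv.pos_le_right
  omega

end Chain

section Levels

def chainSet (R : Set V) : Set V := {v | ∃ m, I.IsChainAt R m v}

noncomputable def rest : ℕ → Set V
  | 0 => Set.univ
  | l + 1 => rest l \ I.chainSet (rest l)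

lemma rest_antitone : Antitone I.rest :=
  antitone_nat_of_succ_le fun _ ↦ Set.sdiff_subset

lemma card_stab_rest_succ_le (l i : ℕ) :
    #(I.stab (I.rest (l + 1)) i) ≤ #(I.stab (I.rest l) i) - 1 := by
  have hsub := I.stab_mono (I.rest_antitone (Nat.le_add_right l 1)) i
  rcases (I.stab (I.rest l) i).eq_empty_or_nonempty with he | hne
  · rw [he, subset_empty] at hsub
    rw [he, hsub, card_empty]
  · obtain ⟨m, v, hv, hvi⟩ := exists_isChainAt_mem_stab hne (m := 0) (Nat.zero_le _)
    have hv' : v ∉ I.stab (I.rest (l + 1)) i := fun h ↦ (mem_stab.1 h).1.2 ⟨m, hv⟩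
    have := card_lt_card ((ssubset_iff_of_subset hsub).2 ⟨v, hvi, hv'⟩)
    omega

lemma card_stab_rest_le (l i : ℕ) : #(I.stab (I.rest l) i) ≤ #(I.stab Set.univ i) - l := by
  induction l with
  | zero => rfl
  | succ l ih =>
    have := I.card_stab_rest_succ_le l i
    omega

variable (k : ℕ)

noncomputable def level (v : V) : ℕ := Nat.findGreatest (v ∈ I.rest ·) k

noncomputable def index (v : V) : ℕ :=
  if h : ∃ m, I.IsChainAt (I.rest (I.level k v)) m v then Nat.find h else 0

lemma level_le (v : V) : I.level k v ≤ k := Nat.findGreatest_le k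

lemma mem_rest_of_le_level {l : ℕ} {v : V} (hl : l ≤ I.level k v) : v ∈ I.rest l :=
  I.rest_antitone hl (Nat.findGreatest_spec (P := (v ∈ I.rest ·)) (Nat.zero_le k) trivial)

lemma isChainAt_index {v : V} (hv : I.level k v < k) :
    I.IsChainAt (I.rest (I.level k v)) (I.index k v) v := by
  have hnot : v ∉ I.rest (I.level k v + 1) :=
    Nat.findGreatest_is_greatest (P := (v ∈ I.rest ·)) (Nat.lt_succ_self _) hv
  have hex : ∃ m, I.IsChainAt (I.rest (I.level k v)) m v := by
    by_contra hex
    exact hnot ⟨I.mem_rest_of_le_level k le_rfl, hex⟩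
  rw [index, dif_pos hex]
  exact Nat.find_spec hex

lemma not_adj_of_level_eq (hw : ∀ i, #(I.stab Set.univ i) ≤ k + 1) {u v : V}
    (hu : I.level k u = k) (hv : I.level k v = k) : ¬ G.Adj u v := by
  intro huv
  obtain ⟨i, hui, hvi⟩ := I.exists_mem_stab_of_adj huv (I.mem_rest_of_le_level k hu.ge)
    (I.mem_rest_of_le_level k hv.ge)
  have := one_lt_card.2 ⟨u, hui, v, hvi, huv.ne⟩
  have := I.card_stab_rest_le k i
  have := hw i
  omega

noncomputable def colour (v : V) : Fin (3 * k + 1) :=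
  if h : I.level k v < k then ⟨3 * I.level k v + I.index k v % 3, by omega⟩ else Fin.last _

lemma level_eq_and_index_mod_of_colour_eq {u v : V} (h : I.colour k u = I.colour k v) :
    I.level k u = I.level k v ∧ (I.level k u < k → I.index k u % 3 = I.index k v % 3) := by
  have := I.level_le k u
  have := I.level_le k v
  unfold colour at h
  split_ifs at h <;> simp only [Fin.ext_iff, Fin.val_last] at h <;> omega

lemma three_le_index_dist {u v : V} (hc : I.colour k u = I.colour k v) (huv : u ≠ v)
    (hu : I.level k u < k) : I.index k u + 3 ≤ I.index k v ∨ I.index k v + 3 ≤ I.index k u := by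
  obtain ⟨hl, hmod⟩ := I.level_eq_and_index_mod_of_colour_eq k hc
  have hne : I.index k u ≠ I.index k v := fun he ↦ huv <|
    (I.isChainAt_index k hu).unique (he ▸ hl ▸ I.isChainAt_index k (hl ▸ hu))
  have := hmod hu
  omega

lemma colour_ne_of_adj (hw : ∀ i, #(I.stab Set.univ i) ≤ k + 1) {u v : V} (huv : G.Adj u v) :
    I.colour k u ≠ I.colour k v := by
  intro hc
  have hl := (I.level_eq_and_index_mod_of_colour_eq k hc).1
  by_cases hlk : I.level k u < k
  · have hu := I.isChainAt_index k hlk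
    have hv := I.isChainAt_index k (hl ▸ hlk)
    rw [← hl] at hv
    rcases I.three_le_index_dist k hc huv.ne hlk with h | h
    · exact (hu.right_lt_left hv (by omega)).not_ge (I.left_le_right_of_adj huv.symm)
    · exact (hv.right_lt_left hu (by omega)).not_ge (I.left_le_right_of_adj huv)
  · have := I.level_le k u
    exact I.not_adj_of_level_eq k hw (by omega) (by omega) huv

lemma colour_ne_of_adj_of_adj (hw : ∀ i, #(I.stab Set.univ i) ≤ k + 1) {x y z : V} (hxz : x ≠ z)
    (hyx : G.Adj y x) (hyz : G.Adj y z) (hl : I.level k x ≤ I.level k y) :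
    I.colour k x ≠ I.colour k z := by
  intro hc
  have hl' := (I.level_eq_and_index_mod_of_colour_eq k hc).1
  by_cases hlk : I.level k x < k
  · have hx := I.isChainAt_index k hlk
    have hz := I.isChainAt_index k (hl' ▸ hlk)
    rw [← hl'] at hz
    have hy := I.mem_rest_of_le_level k hl
    rcases I.three_le_index_dist k hc hxz hlk with h | h
    · exact (hx.right_lt_left_of_mem hz h hy (I.left_le_right_of_adj hyx)).not_ge
        (I.left_le_right_of_adj hyz.symm)
    · exact (hz.right_lt_left_of_mem hx h hy (I.left_le_right_of_adj hyz)).not_ge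
        (I.left_le_right_of_adj hyx.symm)
  · have := I.level_le k x
    have := I.level_le k y
    exact I.not_adj_of_level_eq k hw (by omega) (by omega) hyx

theorem starColouring_colour (hw : ∀ i, #(I.stab Set.univ i) ≤ k + 1) :
    StarColouring G (I.colour k) := by
  refine ProperColouring.starColouring (fun u v ↦ I.colour_ne_of_adj k hw)
    fun x₀ x₁ x₂ x₃ h₀₁ h₁₂ h₂₃ h₀₂ h₁₃ hc₀₂ ↦ ?_
  rcases le_total (I.level k x₀) (I.level k x₁) with hl | hl
  · exact absurd hc₀₂ (I.colour_ne_of_adj_of_adj k hw h₀₂ h₀₁.symm h₁₂ hl)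
  · exact I.colour_ne_of_adj_of_adj k hw h₁₃ h₁₂.symm h₂₃
      (hl.trans_eq (I.level_eq_and_index_mod_of_colour_eq k hc₀₂).1)

end Levels

end IntervalModel

namespace PathDecomp

open scoped Classical

variable {V : Type*} {G : SimpleGraph V}

lemma finite (d : PathDecomp G) : Finite V :=
  Set.finite_univ_iff.1 <| (Set.finite_iUnion fun i ↦ (d.bag i).finite_toSet).subset
    fun v _ ↦ Set.mem_iUnion.2 (d.mem_bag v)

variable (d : PathDecomp G)

noncomputable def bagsOf (v : V) : Finset (Fin d.len) := {i | v ∈ d.bag i}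

lemma bagsOf_nonempty (v : V) : (d.bagsOf v).Nonempty :=
  let ⟨i, hi⟩ := d.mem_bag v
  ⟨i, by simpa [bagsOf] using hi⟩

noncomputable def first (v : V) : Fin d.len := (d.bagsOf v).min' (d.bagsOf_nonempty v)

noncomputable def last (v : V) : Fin d.len := (d.bagsOf v).max' (d.bagsOf_nonempty v)

lemma mem_bag_iff {v : V} {i : Fin d.len} : v ∈ d.bag i ↔ d.first v ≤ i ∧ i ≤ d.last v := by
  have hmem {j : Fin d.len} : j ∈ d.bagsOf v ↔ v ∈ d.bag j := by simp [bagsOf]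
  refine ⟨fun h ↦ ⟨min'_le _ _ (hmem.2 h), le_max' _ _ (hmem.2 h)⟩, fun ⟨h₁, h₂⟩ ↦ ?_⟩
  exact d.consecutive v _ _ _ h₁ h₂ (hmem.1 (min'_mem _ _)) (hmem.1 (max'_mem _ _))

noncomputable def intervalModel : IntervalModel G where
  left v := d.first v
  right v := d.last v
  left_le_right v :=
    let ⟨_, hi⟩ := d.mem_bag v
    ((d.mem_bag_iff.1 hi).1.trans (d.mem_bag_iff.1 hi).2 :)
  left_le_right_of_adj _ _ huv :=
    let ⟨_, hu, hv⟩ := d.edge_mem huv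
    ((d.mem_bag_iff.1 hu).1.trans (d.mem_bag_iff.1 hv).2 :)

lemma card_stab_le [Fintype V] {k : ℕ} (hw : ∀ i, #(d.bag i) ≤ k + 1) (i : ℕ) :
    #(d.intervalModel.stab Set.univ i) ≤ k + 1 := by
  rcases (d.intervalModel.stab Set.univ i).eq_empty_or_nonempty with he | ⟨v, hv⟩
  · simp [he]
  · have hi : i < d.len := (IntervalModel.mem_stab.1 hv).2.2.trans_lt (d.last v).2
    refine (card_le_card fun u hu ↦ d.mem_bag_iff.2 ?_).trans (hw ⟨i, hi⟩)
    exact ⟨(IntervalModel.mem_stab.1 hu).2.1, (IntervalModel.mem_stab.1 hu).2.2⟩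

end PathDecomp

/-- For every graph `G` with pathwidth `k`, `χ_st(G) ≤ 3k + 1`. -/
theorem star_le_of_pathwidth {V : Type*} (G : SimpleGraph V) (k : ℕ)
    (hpw : HasPathwidthLE G k) :
    ∃ φ : V → Fin (3 * k + 1), StarColouring G φ := by
  obtain ⟨d, hw⟩ := hpw
  have := d.finite
  have := Fintype.ofFinite V
  exact ⟨_, d.intervalModel.starColouring_colour k (d.card_stab_le hw)⟩
end

section
/- Fix ε > 0, let w := (1+ε)^{-1/2}, and let c ∈ ℕ satisfy 2^{2/c} ≤ 1+ε and w^c ≤ (ε/2)(1−w). Then for each q ≥ 1, the number of distinct c-spread sequences of length q is at most (1+ε)^q. -/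
/-- A sequence `s` of positive integers of length `q` is `c`-spread if each entry equal
to `1` can be mapped (by a partial assignment `f`) to an entry greater than `1`, such
that every entry `s i ≥ 2` has at least `⌈c log₂ (s i)⌉` entries, either all
immediately before it or all immediately after it, that equal `1` and are mapped
to it. -/
def CSpread (c : ℕ) {q : ℕ} (s : Fin q → ℕ) : Prop :=
  (∀ i, 1 ≤ s i) ∧ ∃ f : Fin q → Option (Fin q),
    (∀ i j, f i = some j → s i = 1 ∧ 2 ≤ s j) ∧
    ∀ i : Fin q, 2 ≤ s i →
      ((⌈(c : ℝ) * Real.logb 2 (s i)⌉₊ ≤ (i : ℕ) ∧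
        ∀ j : Fin q, (i : ℕ) - ⌈(c : ℝ) * Real.logb 2 (s i)⌉₊ ≤ (j : ℕ) → (j : ℕ) < (i : ℕ) →
          s j = 1 ∧ f j = some i) ∨
       ((i : ℕ) + ⌈(c : ℝ) * Real.logb 2 (s i)⌉₊ < q ∧
        ∀ j : Fin q, (i : ℕ) < (j : ℕ) → (j : ℕ) ≤ (i : ℕ) + ⌈(c : ℝ) * Real.logb 2 (s i)⌉₊ →
          s j = 1 ∧ f j = some i))

/-!
Let `N(n)` count the `c`-spread sequences of length `n` and `m(v) = ⌈c log₂ v⌉`. Either the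
first entry is a `1` that does not belong to a left block starting at position `0`, or the
sequence begins with `v, 1^{m(v)}` or with `1^{m(v)}, v` for some `v ≥ 2`; deleting that prefix
leaves a `c`-spread sequence. Hence
`N(n) ≤ N(n-1) + 2 ∑_v N(n - m(v) - 1)`. At most `2^{m/c} ≤ w^{-m}` values `v` have `m(v) = m`,
and `m(v) ≥ c`, so `∑_v (1+ε)^{-m(v)} ≤ ∑_{m ≥ c} w^m ≤ w^c / (1 - w) ≤ ε/2`, which is exactly
what makes `N(n) ≤ (1+ε)^n` propagate by strong induction.
-/

open Finset

noncomputable def blockLen (c v : ℕ) : ℕ := ⌈(c : ℝ) * Real.logb 2 v⌉₊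

lemma le_blockLen {c v : ℕ} (hv : 2 ≤ v) : c ≤ blockLen c v := by
  have hlog : (1 : ℝ) ≤ Real.logb 2 v := by
    rw [Real.le_logb_iff_rpow_le (by norm_num) (by positivity), Real.rpow_one]
    exact_mod_cast hv
  exact_mod_cast (le_mul_of_one_le_right (Nat.cast_nonneg c) hlog).trans (Nat.le_ceil _)

lemma cast_le_two_rpow_of_blockLen_le {c v m : ℕ} (hc : 0 < c) (hv : 0 < v)
    (h : blockLen c v ≤ m) : (v : ℝ) ≤ 2 ^ ((m : ℝ) / c) := by
  rw [← Real.logb_le_iff_le_rpow (by norm_num) (by positivity), le_div_iff₀ (by positivity),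
    mul_comm]
  exact (Nat.le_ceil _).trans (by exact_mod_cast h)

lemma le_two_pow_of_blockLen_le {c v m : ℕ} (hc : 0 < c) (hv : 0 < v)
    (h : blockLen c v ≤ m) : v ≤ 2 ^ m := by
  have hexp : (2 : ℝ) ^ ((m : ℝ) / c) ≤ 2 ^ (m : ℝ) :=
    Real.rpow_le_rpow_of_exponent_le (by norm_num)
      (div_le_self (by positivity) (by exact_mod_cast hc))
  rw [Real.rpow_natCast] at hexp
  exact_mod_cast (cast_le_two_rpow_of_blockLen_le hc hv h).trans hexp

lemma card_filter_blockLen_eq_le {c : ℕ} (hc : 0 < c) (F : Finset ℕ) (hF : ∀ v ∈ F, 0 < v)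
    (m : ℕ) : (#{v ∈ F | blockLen c v = m} : ℝ) ≤ 2 ^ ((m : ℝ) / c) := by
  have hsub : {v ∈ F | blockLen c v = m} ⊆ Icc 1 ⌊(2 : ℝ) ^ ((m : ℝ) / c)⌋₊ := by
    intro v hv
    obtain ⟨hvF, hvm⟩ := mem_filter.mp hv
    exact mem_Icc.mpr
      ⟨hF v hvF, Nat.le_floor (cast_le_two_rpow_of_blockLen_le hc (hF v hvF) hvm.le)⟩
  calc (#{v ∈ F | blockLen c v = m} : ℝ) ≤ ⌊(2 : ℝ) ^ ((m : ℝ) / c)⌋₊ := by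
        exact_mod_cast (card_le_card hsub).trans (by simp)
    _ ≤ 2 ^ ((m : ℝ) / c) := Nat.floor_le (by positivity)

lemma sum_sq_pow_le_of_card_fiber_le {ι : Type*} (F : Finset ι) (g : ι → ℕ) {w : ℝ} {c : ℕ}
    (hw0 : 0 < w) (hw1 : w < 1) (hg : ∀ i ∈ F, c ≤ g i)
    (hfib : ∀ m, (#{i ∈ F | g i = m} : ℝ) ≤ w⁻¹ ^ m) :
    ∑ i ∈ F, (w ^ 2) ^ g i ≤ w ^ c / (1 - w) := by
  classical
  have himage : F.image g ⊆ Ico c (F.sup g + 1) := fun m hm => by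
    obtain ⟨i, hi, rfl⟩ := mem_image.mp hm
    exact mem_Ico.mpr ⟨hg i hi, Nat.lt_succ_of_le (le_sup hi)⟩
  rw [sum_comp (fun m => (w ^ 2) ^ m) g]
  calc ∑ m ∈ F.image g, #{i ∈ F | g i = m} • (w ^ 2) ^ m
      ≤ ∑ m ∈ F.image g, w ^ m := sum_le_sum fun m _ => by
        rw [nsmul_eq_mul]
        calc (#{i ∈ F | g i = m} : ℝ) * (w ^ 2) ^ m ≤ w⁻¹ ^ m * (w ^ 2) ^ m := by
              gcongr; exact hfib m
          _ = w ^ m := by rw [← mul_pow, sq, ← mul_assoc, inv_mul_cancel₀ hw0.ne', one_mul]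
    _ ≤ ∑ m ∈ Ico c (F.sup g + 1), w ^ m :=
        sum_le_sum_of_subset_of_nonneg himage fun m _ _ => by positivity
    _ ≤ w ^ c / (1 - w) := geom_sum_Ico_le_of_lt_one hw0.le hw1

lemma sum_inv_pow_blockLen_le {ε w : ℝ} (hε : 0 < ε) (hw : w = (1 + ε) ^ (-(1/2) : ℝ))
    {c : ℕ} (hc : 0 < c) (hc1 : (2 : ℝ) ^ ((2 : ℝ) / (c : ℝ)) ≤ 1 + ε)
    (hc2 : w ^ c ≤ ε / 2 * (1 - w)) (F : Finset ℕ) (hF : ∀ v ∈ F, 2 ≤ v) :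
    ∑ v ∈ F, (1 + ε)⁻¹ ^ blockLen c v ≤ ε / 2 := by
  have hε1 : (0 : ℝ) < 1 + ε := by linarith
  have hw0 : 0 < w := hw ▸ Real.rpow_pos_of_pos hε1 _
  have hw1 : w < 1 := hw ▸ Real.rpow_lt_one_of_one_lt_of_neg (by linarith) (by norm_num)
  have hwsq : w ^ 2 = (1 + ε)⁻¹ := by
    rw [hw, ← Real.rpow_natCast, ← Real.rpow_mul hε1.le]
    norm_num [Real.rpow_neg_one]
  have hroot : (2 : ℝ) ^ ((1 : ℝ) / c) ≤ w⁻¹ := by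
    have h := Real.rpow_le_rpow (by positivity) hc1 (by norm_num : (0 : ℝ) ≤ 1 / 2)
    rw [← Real.rpow_mul (by norm_num), div_mul_div_comm, mul_comm (c : ℝ), ← div_mul_div_comm,
      div_self two_ne_zero, one_mul] at h
    rwa [hw, Real.rpow_neg hε1.le, inv_inv]
  have hfib : ∀ m, (#{v ∈ F | blockLen c v = m} : ℝ) ≤ w⁻¹ ^ m := fun m =>
    calc (#{v ∈ F | blockLen c v = m} : ℝ) ≤ 2 ^ ((m : ℝ) / c) :=
          card_filter_blockLen_eq_le hc F (fun v hv => by linarith [hF v hv]) m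
      _ = (2 ^ ((1 : ℝ) / c)) ^ m := by
          rw [← Real.rpow_natCast, ← Real.rpow_mul (by norm_num), one_div_mul_eq_div]
      _ ≤ w⁻¹ ^ m := by gcongr
  rw [← hwsq]
  calc ∑ v ∈ F, (w ^ 2) ^ blockLen c v ≤ w ^ c / (1 - w) :=
        sum_sq_pow_le_of_card_fiber_le F _ hw0 hw1 (fun v hv => le_blockLen (hF v hv)) hfib
    _ ≤ ε / 2 := div_le_of_le_mul₀ (by linarith) (by linarith) hc2

section SpreadSequences

variable {c n : ℕ}

def LeftBlock (c : ℕ) (s : Fin n → ℕ) (f : Fin n → Option (Fin n)) (i : Fin n) : Prop :=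
  blockLen c (s i) ≤ (i : ℕ) ∧
    ∀ j : Fin n, (i : ℕ) - blockLen c (s i) ≤ (j : ℕ) → (j : ℕ) < (i : ℕ) →
      s j = 1 ∧ f j = some i

def RightBlock (c : ℕ) (s : Fin n → ℕ) (f : Fin n → Option (Fin n)) (i : Fin n) : Prop :=
  (i : ℕ) + blockLen c (s i) < n ∧
    ∀ j : Fin n, (i : ℕ) < (j : ℕ) → (j : ℕ) ≤ (i : ℕ) + blockLen c (s i) →
      s j = 1 ∧ f j = some i

def IsSpreadAssignment (c : ℕ) (s : Fin n → ℕ) (f : Fin n → Option (Fin n)) : Prop :=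
  (∀ i j, f i = some j → s i = 1 ∧ 2 ≤ s j) ∧
    ∀ i, 2 ≤ s i → LeftBlock c s f i ∨ RightBlock c s f i

lemma cspread_iff {s : Fin n → ℕ} :
    CSpread c s ↔ (∀ i, 1 ≤ s i) ∧ ∃ f, IsSpreadAssignment c s f :=
  Iff.rfl

lemma IsSpreadAssignment.blockLen_lt {s : Fin n → ℕ} {f : Fin n → Option (Fin n)}
    (hf : IsSpreadAssignment c s f) {i : Fin n} (hi : 2 ≤ s i) : blockLen c (s i) < n := by
  rcases hf.2 i hi with h | h
  · exact h.1.trans_lt i.isLt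
  · exact (Nat.le_add_left _ _).trans_lt h.1

def dropLeft {α : Type*} (k : ℕ) (s : Fin n → α) : Fin (n - k) → α :=
  fun j => s ⟨j + k, by omega⟩

lemma IsSpreadAssignment.exists_dropLeft {s : Fin n → ℕ} {f : Fin n → Option (Fin n)} {k : ℕ}
    (hf : IsSpreadAssignment c s f)
    (hleft : ∀ i : Fin n, 2 ≤ s i → k ≤ (i : ℕ) → LeftBlock c s f i →
      k + blockLen c (s i) ≤ (i : ℕ)) :
    ∃ f', IsSpreadAssignment c (dropLeft k s) f' := by
  let f' : Fin (n - k) → Option (Fin (n - k)) := fun j =>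
    (f ⟨j + k, by omega⟩).bind fun i => if h : k ≤ (i : ℕ) then some ⟨i - k, by omega⟩ else none
  have hf' : ∀ (j i : Fin (n - k)), f ⟨j + k, by omega⟩ = some ⟨i + k, by omega⟩ → f' j = some i :=
    fun j i h => by simp [f', h]
  refine ⟨f', fun j i hji => ?_, fun i hi => ?_⟩
  · obtain ⟨I, hI, hIi⟩ := Option.bind_eq_some_iff.mp hji
    split_ifs at hIi with hkI
    cases hIi
    obtain ⟨hj1, hI2⟩ := hf.1 _ _ hI
    exact ⟨hj1, by simpa [dropLeft, Nat.sub_add_cancel hkI] using hI2⟩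
  rcases hf.2 ⟨i + k, by omega⟩ hi with hL | hR
  · have hkL := hleft _ hi (by simp) hL
    refine Or.inl ⟨by simp [dropLeft] at hkL ⊢; omega, fun j hj1 hj2 => ?_⟩
    obtain ⟨hsj, hfj⟩ := hL.2 ⟨j + k, by omega⟩ (by simp [dropLeft] at hj1 ⊢; omega)
      (by simp; omega)
    exact ⟨hsj, hf' j i hfj⟩
  · have hR1 : (i : ℕ) + k + blockLen c (dropLeft k s i) < n := hR.1
    refine Or.inr ⟨by omega, fun j hj1 hj2 => ?_⟩
    obtain ⟨hsj, hfj⟩ := hR.2 ⟨j + k, by omega⟩ (by simp; omega)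
      (by simp [dropLeft] at hj2 ⊢; omega)
    exact ⟨hsj, hf' j i hfj⟩

def withPrefix (k : ℕ) (p : ℕ → ℕ) (T : Set (Fin (n - k) → ℕ)) : Set (Fin n → ℕ) :=
  {s | (∀ i : Fin n, (i : ℕ) < k → s i = p i) ∧ dropLeft k s ∈ T}

lemma injOn_dropLeft_withPrefix (k : ℕ) (p : ℕ → ℕ) (T : Set (Fin (n - k) → ℕ)) :
    Set.InjOn (dropLeft k) (withPrefix k p T) := by
  intro s hs s' hs' h
  funext i
  by_cases hik : (i : ℕ) < k
  · rw [hs.1 i hik, hs'.1 i hik]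
  · simpa [dropLeft, Nat.sub_add_cancel (not_lt.mp hik)] using congrFun h ⟨i - k, by omega⟩

lemma finite_withPrefix {k : ℕ} {T : Set (Fin (n - k) → ℕ)} (hT : T.Finite) (p : ℕ → ℕ) :
    (withPrefix k p T).Finite :=
  Set.Finite.of_finite_image (hT.subset (Set.image_subset_iff.mpr fun _ hs => hs.2))
    (injOn_dropLeft_withPrefix k p T)

lemma ncard_withPrefix_le {k : ℕ} {T : Set (Fin (n - k) → ℕ)} (hT : T.Finite) (p : ℕ → ℕ) :
    (withPrefix k p T).ncard ≤ T.ncard :=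
  Set.ncard_le_ncard_of_injOn _ (fun _ hs => hs.2) (injOn_dropLeft_withPrefix k p T) hT

def spreadSeqs (c n : ℕ) : Set (Fin n → ℕ) := {s | CSpread c s}

noncomputable def numSpread (c n : ℕ) : ℕ := (spreadSeqs c n).ncard

noncomputable def bigValues (c n : ℕ) : Finset ℕ := {v ∈ Icc 2 (2 ^ n) | blockLen c v < n}

lemma IsSpreadAssignment.mem_bigValues {s : Fin n → ℕ} {f : Fin n → Option (Fin n)}
    (hc : 0 < c) (hf : IsSpreadAssignment c s f) {i : Fin n} (hi : 2 ≤ s i) :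
    s i ∈ bigValues c n :=
  mem_filter.mpr ⟨mem_Icc.mpr ⟨hi, le_two_pow_of_blockLen_le hc (by omega)
    (hf.blockLen_lt hi).le⟩, hf.blockLen_lt hi⟩

lemma finite_spreadSeqs (hc : 0 < c) : (spreadSeqs c n).Finite := by
  refine (Set.Finite.pi fun _ : Fin n => Set.finite_Icc 1 (2 ^ n)).subset ?_
  intro s hs' i _
  obtain ⟨hs, f, hf⟩ := cspread_iff.mp hs'
  by_cases hi : 2 ≤ s i
  · exact ⟨hs i, (mem_Icc.mp (mem_filter.mp (hf.mem_bigValues hc hi)).1).2⟩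
  · exact ⟨hs i, by have := Nat.one_le_two_pow (n := n); omega⟩

lemma infinite_spreadSeqs_zero (hn : 0 < n) : (spreadSeqs 0 n).Infinite := by
  refine Set.infinite_of_injective_forall_mem (f := fun v : ℕ => fun _ : Fin n => v + 1)
    (fun a b h => by simpa using congrFun h ⟨0, hn⟩) fun v => ?_
  show CSpread 0 fun _ : Fin n => v + 1
  refine cspread_iff.mpr ⟨fun _ => Nat.le_add_left 1 v, fun _ => none,
    ⟨fun _ _ h => (nomatch h), fun i _ => Or.inl ⟨by simp [blockLen], fun j hj hji => ?_⟩⟩⟩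
  simp [blockLen] at hj
  omega

lemma numSpread_zero_le_one (c : ℕ) : numSpread c 0 ≤ 1 :=
  Set.ncard_le_one_of_subsingleton _

lemma mem_withPrefix_of_leftBlock_start {s : Fin n → ℕ} {f : Fin n → Option (Fin n)}
    (hs : ∀ i, 1 ≤ s i) (hf : IsSpreadAssignment c s f) {i : Fin n} (hi : 2 ≤ s i)
    (hL : LeftBlock c s f i) (hstart : blockLen c (s i) = i) :
    s ∈ withPrefix (blockLen c (s i) + 1) (Function.update 1 (blockLen c (s i)) (s i))
      (spreadSeqs c _) := by
  refine ⟨fun p hp => ?_, fun _ => hs _, hf.exists_dropLeft fun i' hi' hki' hL' => ?_⟩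
  · rw [Function.update_apply]
    split_ifs with hpi
    · rw [show p = i from Fin.ext (by omega)]
    · exact (hL.2 p (by omega) (by omega)).1
  · by_contra hlt
    have := (hL'.2 i (by omega) (by omega)).1
    omega

lemma mem_withPrefix_of_rightBlock_zero {s : Fin n → ℕ} {f : Fin n → Option (Fin n)}
    (hs : ∀ i, 1 ≤ s i) (hf : IsSpreadAssignment c s f) (hn : 0 < n) (h0 : 2 ≤ s ⟨0, hn⟩)
    (hR : RightBlock c s f ⟨0, hn⟩) :
    s ∈ withPrefix (blockLen c (s ⟨0, hn⟩) + 1) (Function.update 1 0 (s ⟨0, hn⟩))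
      (spreadSeqs c _) := by
  have hm : blockLen c (s ⟨0, hn⟩) < n := by simpa using hR.1
  refine ⟨fun p hp => ?_, fun _ => hs _, hf.exists_dropLeft fun i' hi' hki' hL' => ?_⟩
  · rw [Function.update_apply]
    split_ifs with hp0
    · rw [show p = ⟨0, hn⟩ from Fin.ext hp0]
    · exact (hR.2 p (by simp; omega) (by simp; omega)).1
  · by_contra hlt
    obtain ⟨hs1, hf1⟩ := hL'.2 ⟨_, hm⟩ (by simp; omega) (by simp; omega)
    rcases Nat.eq_zero_or_pos (blockLen c (s ⟨0, hn⟩)) with h | h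
    · simp only [h] at hs1
      omega
    · rw [(hR.2 ⟨_, hm⟩ (by simpa using h) (by simp)).2] at hf1
      have := congrArg Fin.val (Option.some.inj hf1)
      simp at this
      omega

lemma mem_withPrefix_one {s : Fin n → ℕ} {f : Fin n → Option (Fin n)}
    (hs : ∀ i, 1 ≤ s i) (hf : IsSpreadAssignment c s f) (hn : 0 < n) (h0 : s ⟨0, hn⟩ = 1)
    (hno : ∀ i, 2 ≤ s i → LeftBlock c s f i → blockLen c (s i) ≠ i) :
    s ∈ withPrefix 1 1 (spreadSeqs c (n - 1)) := by
  refine ⟨fun p hp => ?_, fun _ => hs _, hf.exists_dropLeft fun i' hi' hki' hL' => ?_⟩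
  · rw [show p = ⟨0, hn⟩ from Fin.ext (Nat.lt_one_iff.mp hp), h0, Pi.one_apply]
  · by_contra hlt
    exact hno i' hi' hL' (by have := hL'.1; omega)

lemma spreadSeqs_subset (hc : 0 < c) (hn : 0 < n) :
    spreadSeqs c n ⊆ withPrefix 1 1 (spreadSeqs c (n - 1)) ∪
      ⋃ v ∈ bigValues c n,
        (withPrefix (blockLen c v + 1) (Function.update 1 0 v) (spreadSeqs c _) ∪
          withPrefix (blockLen c v + 1) (Function.update 1 (blockLen c v) v) (spreadSeqs c _)) := by
  intro s hs'
  obtain ⟨hs, f, hf⟩ := cspread_iff.mp hs'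
  by_cases hstart : ∃ i, 2 ≤ s i ∧ LeftBlock c s f i ∧ blockLen c (s i) = i
  · obtain ⟨i, hi, hL, hiL⟩ := hstart
    exact Or.inr (Set.mem_biUnion (hf.mem_bigValues hc hi)
      (Or.inr (mem_withPrefix_of_leftBlock_start hs hf hi hL hiL)))
  push Not at hstart
  by_cases h0 : 2 ≤ s ⟨0, hn⟩
  · have hR : RightBlock c s f ⟨0, hn⟩ := (hf.2 _ h0).resolve_left fun hL =>
      hstart _ h0 hL (Nat.le_zero.mp hL.1)
    exact Or.inr (Set.mem_biUnion (hf.mem_bigValues hc h0)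
      (Or.inl (mem_withPrefix_of_rightBlock_zero hs hf hn h0 hR)))
  · exact Or.inl (mem_withPrefix_one hs hf hn (by have := hs ⟨0, hn⟩; omega) hstart)

lemma numSpread_le (hc : 0 < c) (hn : 0 < n) :
    numSpread c n ≤ numSpread c (n - 1) +
      ∑ v ∈ bigValues c n, 2 * numSpread c (n - (blockLen c v + 1)) := by
  have hfin : ∀ k p, (withPrefix (n := n) k p (spreadSeqs c (n - k))).Finite :=
    fun _ => finite_withPrefix (finite_spreadSeqs hc)
  have hcard : ∀ k p, (withPrefix (n := n) k p (spreadSeqs c (n - k))).ncard ≤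
      numSpread c (n - k) :=
    fun _ => ncard_withPrefix_le (finite_spreadSeqs hc)
  refine (Set.ncard_le_ncard (spreadSeqs_subset hc hn) ((hfin _ _).union
    ((bigValues c n).finite_toSet.biUnion fun _ _ => (hfin _ _).union (hfin _ _)))).trans ?_
  refine (Set.ncard_union_le _ _).trans (add_le_add (hcard _ _) ?_)
  refine (Finset.set_ncard_biUnion_le _ _).trans (sum_le_sum fun v _ => ?_)
  rw [two_mul]
  exact (Set.ncard_union_le _ _).trans (add_le_add (hcard _ _) (hcard _ _))

end SpreadSequences

lemma le_pow_of_le_add_sum {ι : Type*} {N : ℕ → ℕ} {a : ℝ} (ha : 1 ≤ a) (V : ℕ → Finset ι)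
    (g : ι → ℕ) (hg : ∀ n, ∀ v ∈ V n, g v < n) (hV : ∀ n, ∑ v ∈ V n, a⁻¹ ^ g v ≤ (a - 1) / 2)
    (h0 : N 0 ≤ 1) (hN : ∀ n, 0 < n → N n ≤ N (n - 1) + ∑ v ∈ V n, 2 * N (n - (g v + 1)))
    (n : ℕ) : (N n : ℝ) ≤ a ^ n := by
  induction n using Nat.strong_induction_on with
  | _ n ih =>
  rcases n with _ | n
  · simpa using h0
  have hstep : (N (n + 1) : ℝ) ≤ N n + ∑ v ∈ V (n + 1), 2 * (N (n - g v) : ℝ) := by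
    have := hN (n + 1) n.succ_pos
    simp only [Nat.add_sub_cancel, Nat.add_sub_add_right] at this
    exact_mod_cast this
  calc (N (n + 1) : ℝ) ≤ N n + ∑ v ∈ V (n + 1), 2 * (N (n - g v) : ℝ) := hstep
    _ ≤ a ^ n + ∑ v ∈ V (n + 1), 2 * (a ^ n * a⁻¹ ^ g v) := by
        gcongr with v hv
        · exact ih n n.lt_succ_self
        · rw [inv_pow, ← pow_sub₀ a (by positivity) (Nat.lt_succ_iff.mp (hg _ v hv))]
          exact ih _ (by omega)
    _ = a ^ n * (1 + 2 * ∑ v ∈ V (n + 1), a⁻¹ ^ g v) := by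
        rw [mul_add, mul_one, mul_sum, mul_sum]
        exact congrArg _ (sum_congr rfl fun _ _ => by ring)
    _ ≤ a ^ n * (1 + (a - 1)) := by gcongr; linarith [hV (n + 1)]
    _ = a ^ (n + 1) := by ring

theorem cspread_count_general (ε : ℝ) (hε : 0 < ε) (w : ℝ) (hw : w = (1 + ε) ^ (-(1/2) : ℝ))
    (c : ℕ) (hc1 : (2 : ℝ) ^ ((2 : ℝ) / (c : ℝ)) ≤ 1 + ε)
    (hc2 : w ^ c ≤ ε / 2 * (1 - w)) (q : ℕ) :
    (({s : Fin q → ℕ | CSpread c s} : Set (Fin q → ℕ)).ncard : ℝ) ≤ (1 + ε) ^ q := by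
  change (numSpread c q : ℝ) ≤ (1 + ε) ^ q
  rcases Nat.eq_zero_or_pos c with rfl | hc
  -- for `c = 0` every constant sequence is `0`-spread: the set is infinite, so its `ncard` is `0`
  · rcases Nat.eq_zero_or_pos q with rfl | hq
    · rw [pow_zero]
      exact_mod_cast numSpread_zero_le_one 0
    · rw [numSpread, (infinite_spreadSeqs_zero hq).ncard, Nat.cast_zero]
      positivity
  refine le_pow_of_le_add_sum (by linarith) (bigValues c) (blockLen c)
    (fun _ _ hv => (mem_filter.mp hv).2) (fun _ => ?_) (numSpread_zero_le_one c)
    (fun _ hn => numSpread_le hc hn) q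
  rw [add_sub_cancel_left]
  exact sum_inv_pow_blockLen_le hε hw hc hc1 hc2 _ fun _ hv => (mem_Icc.mp (mem_filter.mp hv).1).1

/-- Fix `ε > 0`, let `w := (1+ε)^{-1/2}`, and let `c ∈ ℕ` satisfy `2^{2/c} ≤ 1+ε` and
`w^c ≤ (ε/2)(1-w)`. Then for each `q ≥ 1` the number of distinct `c`-spread sequences
of length `q` is at most `(1+ε)^q`. -/
theorem cspread_count (ε : ℝ) (hε : 0 < ε) (w : ℝ) (hw : w = (1 + ε) ^ (-(1/2) : ℝ))
    (c : ℕ) (hc1 : (2 : ℝ) ^ ((2 : ℝ) / (c : ℝ)) ≤ 1 + ε)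
    (hc2 : w ^ c ≤ ε / 2 * (1 - w)) (q : ℕ) (hq : 1 ≤ q) :
    (({s : Fin q → ℕ | CSpread c s} : Set (Fin q → ℕ)).ncard : ℝ) ≤ (1 + ε) ^ q :=
  cspread_count_general ε hε w hw c hc1 hc2 q
end

section
/- The number of binary words of length 2t that are Dyck words and do not contain 0110110 as a substring is at most 3.992^{t+1}. -/
/-- Binary words are lists over `Bool` (`false` = 0, `true` = 1). The pattern `0110110`. -/
def pattern0110110 : List Bool := [false, true, true, false, true, true, false]

/-- A Dyck word: equally many zeroes and ones, and in every prefix the number of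
zeroes is at least the number of ones. -/
def IsDyck (l : List Bool) : Prop :=
  l.count false = l.count true ∧ ∀ p : List Bool, p <+: l → p.count true ≤ p.count false

/-!
Already the words avoiding `0110110` are few enough. Cut a word of length `2t` into
`2t / 7` blocks of length 7 and a remainder: no block can be the pattern, so each block has
`2 ^ 7 - 1 = 127` choices, and `127 ^ (2 / 7) < 3.992`.
-/

open Set

namespace List

variable {α : Type*}

def wordsAvoiding (w : List α) (n : ℕ) : Set (List α) := {l | l.length = n ∧ ¬ w <:+: l}

theorem ncard_setOf_length_eq [Fintype α] (n : ℕ) :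
    {l : List α | l.length = n}.ncard = Fintype.card α ^ n := by
  rw [← Nat.card_coe_set_eq, ← card_vector, ← Nat.card_eq_fintype_card]
  rfl

theorem finite_wordsAvoiding [Finite α] (w : List α) (n : ℕ) : (wordsAvoiding w n).Finite :=
  (finite_length_eq α n).subset fun _ hl => hl.1

theorem ncard_wordsAvoiding_add_le [Fintype α] (w : List α) (n : ℕ) :
    (wordsAvoiding w (w.length + n)).ncard ≤
      (Fintype.card α ^ w.length - 1) * (wordsAvoiding w n).ncard := by
  set k := w.length
  have hblocks : ({v : List α | v.length = k} \ {w}).ncard = Fintype.card α ^ k - 1 := by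
    rw [ncard_sdiff_singleton_of_mem (by exact rfl), ncard_setOf_length_eq]
  rw [← hblocks, ← ncard_prod]
  refine ncard_le_ncard_of_injOn (fun l => (l.take k, l.drop k)) ?_ ?_
    (((finite_length_eq α k).sdiff).prod (finite_wordsAvoiding w n))
  · rintro l ⟨hlen, havoid⟩
    refine ⟨⟨by simp [hlen], fun hw => havoid ?_⟩, by simp [hlen], fun hw => havoid ?_⟩
    · exact (mem_singleton_iff.mp hw) ▸ (take_prefix k l).isInfix
    · exact hw.trans (drop_suffix k l).isInfix
  · intro x _ y _ hxy
    obtain ⟨htake, hdrop⟩ := Prod.ext_iff.mp hxy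
    rw [← take_append_drop k x, ← take_append_drop k y]
    exact congrArg₂ (· ++ ·) htake hdrop

theorem ncard_wordsAvoiding_le [Fintype α] (w : List α) (n : ℕ) :
    (wordsAvoiding w n).ncard ≤
      (Fintype.card α ^ w.length - 1) ^ (n / w.length) * Fintype.card α ^ (n % w.length) := by
  suffices ∀ q r, (wordsAvoiding w (w.length * q + r)).ncard ≤
      (Fintype.card α ^ w.length - 1) ^ q * Fintype.card α ^ r by
    simpa only [Nat.div_add_mod] using this (n / w.length) (n % w.length)
  intro q r
  induction q with
  | zero =>
    rw [mul_zero, zero_add, pow_zero, one_mul, ← ncard_setOf_length_eq r]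
    exact ncard_le_ncard (fun _ hl => hl.1) (finite_length_eq α r)
  | succ q ih =>
    rw [mul_add_one, add_comm _ w.length, add_assoc, pow_succ', mul_assoc]
    exact (ncard_wordsAvoiding_add_le w _).trans (Nat.mul_le_mul_left _ ih)

end List

theorem pow_127_mul_pow_two_le {q r t : ℕ} (hqr : 7 * q + r = 2 * t) (hr : r < 7) :
    (127 : ℝ) ^ q * 2 ^ r ≤ 3.992 ^ (t + 1) := by
  have hsq : ((127 : ℝ) ^ q * 2 ^ r) ^ 2 ≤ ((3.992 : ℝ) ^ (t + 1)) ^ 2 := calc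
    ((127 : ℝ) ^ q * 2 ^ r) ^ 2 = ((127 : ℝ) ^ 2) ^ q * 4 ^ r := by
      rw [mul_pow, ← pow_mul, ← pow_mul, mul_comm q, mul_comm r, pow_mul, pow_mul]
      norm_num
    _ ≤ ((3.992 : ℝ) ^ 7) ^ q * 3.992 ^ (r + 2) := by
      gcongr
      · norm_num
      · interval_cases r <;> norm_num
    _ = ((3.992 : ℝ) ^ (t + 1)) ^ 2 := by
      rw [← pow_mul, ← pow_mul, ← pow_add]
      congr 1
      omega
  exact (pow_le_pow_iff_left₀ (by positivity) (by positivity) two_ne_zero).mp hsq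

/-- The number of Dyck words of length `2t` not containing `0110110` as a (contiguous)
substring is at most `3.992^{t+1}`. -/
theorem special_dyck_count (t : ℕ) :
    (({l : List Bool | l.length = 2 * t ∧ IsDyck l ∧ ¬ pattern0110110 <:+: l} :
        Set (List Bool)).ncard : ℝ) ≤ (3.992 : ℝ) ^ (t + 1) := by
  have hsub : {l : List Bool | l.length = 2 * t ∧ IsDyck l ∧ ¬ pattern0110110 <:+: l} ⊆
      List.wordsAvoiding pattern0110110 (2 * t) := fun _ hl => ⟨hl.1, hl.2.2⟩
  have hcount := (ncard_le_ncard hsub (List.finite_wordsAvoiding _ _)).trans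
    (List.ncard_wordsAvoiding_le pattern0110110 (2 * t))
  simp only [Fintype.card_bool, pattern0110110, List.length_cons, List.length_nil] at hcount
  calc _ ≤ ((127 ^ (2 * t / 7) * 2 ^ (2 * t % 7) : ℕ) : ℝ) := by exact_mod_cast hcount
    _ ≤ 3.992 ^ (t + 1) := by
      push_cast
      exact pow_127_mul_pow_two_le (Nat.div_add_mod _ _) (Nat.mod_lt _ (by norm_num))
end

section
/- Every cycle is nonrepetitively 5-choosable: for any assignment of lists of 5 colours to the vertices of a cycle C_n (n ≥ 3), there is a colouring from the lists with no repetitively coloured path, given that every path is nonrepetitively 4-choosable. -/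
theorem List.count_map_eq_count_of_forall_eq_iff {α β : Type*} [BEq β] [LawfulBEq β]
    [DecidableEq α] {f : α → β} {a : α} {b : β} {l : List α}
    (h : ∀ x ∈ l, f x = b ↔ x = a) : (l.map f).count b = l.count a := by
  simp only [List.count_eq_countP, List.countP_map]
  exact List.countP_congr fun x hx => by simpa using h x hx

theorem SimpleGraph.Walk.edges_subset_edgeSet_of_adj {V : Type*} {G H : SimpleGraph V}
    {u w : V} (p : G.Walk u w) (h : ∀ a ∈ p.support, ∀ b ∈ p.support, G.Adj a b → H.Adj a b) :
    ∀ e ∈ p.edges, e ∈ H.edgeSet := by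
  intro e he
  induction e using Sym2.ind with
  | h a b =>
    exact h a (p.fst_mem_support_of_mem_edges he) b (p.snd_mem_support_of_mem_edges he)
      (p.adj_of_mem_edges he)

theorem Nonrepetitive.update_of_forall_ne {V α : Type*} [DecidableEq V]
    {G H : SimpleGraph V} {φ : V → α} (hφ : Nonrepetitive H φ) {v : V} {c : α}
    (hc : ∀ w, w ≠ v → φ w ≠ c) (hGH : ∀ a b, a ≠ v → b ≠ v → G.Adj a b → H.Adj a b) :
    Nonrepetitive G (Function.update φ v c) := by
  classical
  intro x y p hp l _ hmap
  by_cases hv : v ∈ p.support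
  · have hcount : (p.support.map (Function.update φ v c)).count c = 1 := by
      rw [List.count_map_eq_count_of_forall_eq_iff, List.count_eq_one_of_mem hp.support_nodup hv]
      intro w _
      by_cases hw : w = v
      · simp [hw]
      · simp [hw, hc w hw]
    rw [hmap, List.count_append] at hcount
    omega
  · have hne : ∀ w ∈ p.support, w ≠ v := fun w hw hwv => hv (hwv ▸ hw)
    have hedges := p.edges_subset_edgeSet_of_adj fun a ha b hb => hGH a b (hne a ha) (hne b hb)
    refine hφ (p.transfer H hedges) (hp.transfer hedges) l ‹_› ?_
    rw [p.support_transfer, ← hmap]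
    exact List.map_congr_left fun w hw => (Function.update_of_ne (hne w hw) _ _).symm

theorem Fin.val_add_one_eq_of_val_sub_eq_one {n : ℕ} [NeZero n] {a b : Fin n} (ha : a ≠ 0)
    (h : (a - b).val = 1) : b.val + 1 = a.val := by
  rcases le_or_gt b a with hle | hlt
  · rw [Fin.sub_val_of_le hle] at h
    omega
  · rw [Fin.coe_sub_iff_lt.mpr hlt] at h
    have := Fin.pos_iff_ne_zero.mpr ha
    omega

theorem SimpleGraph.pathGraph_adj_of_cycleGraph_adj {n : ℕ} [NeZero n] {a b : Fin n}
    (ha : a ≠ 0) (hb : b ≠ 0) (h : (cycleGraph n).Adj a b) : (pathGraph n).Adj a b := by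
  rw [cycleGraph_adj'] at h
  rw [pathGraph_adj]
  rcases h with h | h
  · exact .inr (Fin.val_add_one_eq_of_val_sub_eq_one ha h)
  · exact .inl (Fin.val_add_one_eq_of_val_sub_eq_one hb h)

/-- Assuming every path is nonrepetitively 4-choosable (Grytczuk–Przybyło–Zhu),
every cycle `C_n` (`n ≥ 3`) is nonrepetitively 5-choosable. -/
theorem cycle_five_choosable
    (hpath : ∀ (n : ℕ) (L : Fin n → Finset ℕ), (∀ v, 4 ≤ (L v).card) →
      ∃ φ : Fin n → ℕ, (∀ v, φ v ∈ L v) ∧ Nonrepetitive (SimpleGraph.pathGraph n) φ) :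
    ∀ (n : ℕ), 3 ≤ n → ∀ L : Fin n → Finset ℕ, (∀ v, 5 ≤ (L v).card) →
      ∃ φ : Fin n → ℕ, (∀ v, φ v ∈ L v) ∧ Nonrepetitive (SimpleGraph.cycleGraph n) φ := by
  intro n hn L hL
  have : NeZero n := ⟨by omega⟩
  obtain ⟨c, hc⟩ : (L 0).Nonempty := Finset.card_pos.mp (by have := hL 0; omega)
  obtain ⟨φ, hφL, hφ⟩ := hpath n (fun v => (L v).erase c) fun v => by
    have := Finset.pred_card_le_card_erase (s := L v) (a := c)
    have := hL v
    omega
  refine ⟨Function.update φ 0 c, fun v => ?_, hφ.update_of_forall_ne ?_ ?_⟩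
  · by_cases hv : v = 0
    · simpa [hv] using hc
    · simpa [hv] using Finset.mem_of_mem_erase (hφL v)
  · exact fun w _ => Finset.ne_of_mem_erase (hφL w)
  · exact fun a b ha hb => SimpleGraph.pathGraph_adj_of_cycleGraph_adj ha hb
end
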